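/- If i is a call position of a word σ with matching return j, then the caller of every position k with i < k < j along the caller-path structure eventually reaches i; more precisely, for every position k with i < k < j, position i occurs in the caller path of σ from k. -/

import Mathlib

/-!
Inside a well-matched word no prefix has more returns than calls, while a well-matched word
followed by a return has one more; hence a call has at most one matching return. So if `i` has
matching return `j` and `i < p < j`, then `i` is a candidate caller of `p`, and the caller of `p`
(the greatest candidate) lies in `[i, p)`. Strong induction on `p` walks the caller path down
to `i`.
-/

inductive SymKind where
  | call | ret | intl
deriving DecidableEq

/-- Well-matched words over a pushdown alphabet, where `k` assigns to each
letter its kind (call, return, or internal). -/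
inductive WellMatched {A : Type*} (k : A → SymKind) : List A → Prop
  | nil : WellMatched k []
  | int {a : A} {s : List A} : k a = SymKind.intl → WellMatched k s →
      WellMatched k (a :: s)
  | matched {c r : A} {s s' : List A} : k c = SymKind.call → k r = SymKind.ret →
      WellMatched k s → WellMatched k s' →
      WellMatched k (c :: (s ++ r :: s'))

/-- Number of call symbols in a finite word. -/
def callCount {A : Type*} (k : A → SymKind) (s : List A) : ℕ :=
  s.countP (fun a => decide (k a = SymKind.call))

/-- Number of return symbols in a finite word. -/
def retCount {A : Type*} (k : A → SymKind) (s : List A) : ℕ :=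
  s.countP (fun a => decide (k a = SymKind.ret))

/-- The finite subword `σ[i, j-1]` of the infinite word `σ` (letters at
positions `i, i+1, ..., j-1`). -/
def wordSlice {A : Type*} (σ : ℕ → A) (i j : ℕ) : List A :=
  (List.range (j - i)).map fun n => σ (i + n)

/-- `j` is a matching return of position `i`: `j > i`, `j` is a return
position, and the subword `σ[i+1, j-1]` is well-matched. -/
def MatchRet {A : Type*} (k : A → SymKind) (σ : ℕ → A) (i j : ℕ) : Prop :=
  i < j ∧ k (σ j) = SymKind.ret ∧ WellMatched k (wordSlice σ (i + 1) j)

/-- The abstract-successor relation `SUCC(abs, σ, i) = j`. -/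
def AbsSucc {A : Type*} (k : A → SymKind) (σ : ℕ → A) (i j : ℕ) : Prop :=
  if k (σ i) = SymKind.call then MatchRet k σ i j
  else j = i + 1 ∧ k (σ (i + 1)) ≠ SymKind.ret

/-- `j` is a candidate caller of `i`: a call position `j < i` whose abstract
successor is undefined or greater than `i`. -/
def CallerCand {A : Type*} (k : A → SymKind) (σ : ℕ → A) (i j : ℕ) : Prop :=
  j < i ∧ k (σ j) = SymKind.call ∧ ∀ m, AbsSucc k σ j m → i < m

/-- `j` is the caller of `i`: the greatest candidate caller. -/
def Caller {A : Type*} (k : A → SymKind) (σ : ℕ → A) (i j : ℕ) : Prop :=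
  CallerCand k σ i j ∧ ∀ j', CallerCand k σ i j' → j' ≤ j

/-- `S` is a maximal abstract path (MAP): the set of positions reachable via
the abstract successor from a position `i0` with no abstract predecessor. -/
def IsMAP {A : Type*} (k : A → SymKind) (σ : ℕ → A) (S : Set ℕ) : Prop :=
  ∃ i0, (¬ ∃ p, AbsSucc k σ p i0) ∧
    S = {j | Relation.ReflTransGen (AbsSucc k σ) i0 j}

/-- The set of positions of the (unique) maximal abstract path visiting `i`. -/
def PosA {A : Type*} (k : A → SymKind) (σ : ℕ → A) (i : ℕ) : Set ℕ :=
  {j | Relation.ReflTransGen (AbsSucc k σ) i j ∨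
       Relation.ReflTransGen (AbsSucc k σ) j i}

/-- The set of positions of the caller path of `σ` from `i`. -/
def PosC {A : Type*} (k : A → SymKind) (σ : ℕ → A) (i : ℕ) : Set ℕ :=
  {j | Relation.ReflTransGen (fun a b => Caller k σ a b) i j}

section Counts

variable {A : Type*} (k : A → SymKind) (a : A) (s t : List A)

@[simp]
theorem callCount_nil : callCount k [] = 0 := rfl

@[simp]
theorem retCount_nil : retCount k [] = 0 := rfl

@[simp]
theorem callCount_cons :
    callCount k (a :: s) = callCount k s + if k a = SymKind.call then 1 else 0 := by
  simp [callCount, List.countP_cons]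

@[simp]
theorem retCount_cons :
    retCount k (a :: s) = retCount k s + if k a = SymKind.ret then 1 else 0 := by
  simp [retCount, List.countP_cons]

@[simp]
theorem callCount_append : callCount k (s ++ t) = callCount k s + callCount k t :=
  List.countP_append ..

@[simp]
theorem retCount_append : retCount k (s ++ t) = retCount k s + retCount k t :=
  List.countP_append ..

end Counts

namespace WellMatched

variable {A : Type*} {k : A → SymKind} {s : List A}

theorem retCount_eq_callCount (h : WellMatched k s) : retCount k s = callCount k s := by
  induction h with
  | nil => rfl
  | int ha _ ih => simp [ha, ih]
  | matched hc hr _ _ ih₁ ih₂ =>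
    simp [hc, hr, ih₁, ih₂]
    omega

theorem retCount_le_callCount_of_prefix (h : WellMatched k s) {t : List A} (ht : t <+: s) :
    retCount k t ≤ callCount k t := by
  induction h generalizing t with
  | nil => simp [List.prefix_nil.mp ht]
  | int ha _ ih =>
    rcases List.prefix_cons_iff.mp ht with rfl | ⟨t', rfl, ht'⟩
    · simp
    · simpa [ha] using ih ht'
  | @matched c r s s' hc hr hs _ ih₁ ih₂ =>
    rcases List.prefix_cons_iff.mp ht with rfl | ⟨t', rfl, ht'⟩
    · simp
    have hs_eq := hs.retCount_eq_callCount
    rcases List.prefix_or_prefix_of_prefix ht' (List.prefix_append s (r :: s')) with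
      ht's | ⟨u, rfl⟩
    · have := ih₁ ht's
      simp [hc]
      omega
    rcases List.prefix_cons_iff.mp ((List.prefix_append_right_inj s).mp ht') with
      rfl | ⟨u', rfl, hu'⟩
    · simp [hc]
      omega
    · have := ih₂ hu'
      simp [hc, hr]
      omega

theorem not_append_ret_prefix {w : List A} {r : A} (hw : WellMatched k w)
    (hr : k r = SymKind.ret) (hs : WellMatched k s) : ¬ w ++ [r] <+: s := by
  intro hpre
  have hle := hs.retCount_le_callCount_of_prefix hpre
  have heq := hw.retCount_eq_callCount
  simp [hr] at hle
  omega

end WellMatched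

section Slices

variable {A : Type*} (σ : ℕ → A) {a b c : ℕ}

theorem wordSlice_succ_right (h : a ≤ b) : wordSlice σ a (b + 1) = wordSlice σ a b ++ [σ b] := by
  simp [wordSlice, Nat.sub_add_comm h, List.range_succ, Nat.add_sub_cancel' h]

theorem wordSlice_prefix_of_le (h : b ≤ c) : wordSlice σ a b <+: wordSlice σ a c := by
  have hrange : List.range (b - a) <+: List.range (c - a) := by
    rw [show c - a = (b - a) + (c - a - (b - a)) by omega, List.range_add]
    exact List.prefix_append _ _
  exact hrange.map _

end Slices

section Callers

variable {A : Type*} {k : A → SymKind} {σ : ℕ → A} {i j m p q : ℕ}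

theorem MatchRet.le (hj : MatchRet k σ i j) (hm : MatchRet k σ i m) : j ≤ m := by
  obtain ⟨-, -, hwj⟩ := hj
  obtain ⟨him, hrm, hwm⟩ := hm
  by_contra! hmj
  refine hwm.not_append_ret_prefix hrm hwj ?_
  rw [← wordSlice_succ_right σ (by omega : i + 1 ≤ m)]
  exact wordSlice_prefix_of_le σ hmj

theorem MatchRet.unique (hj : MatchRet k σ i j) (hm : MatchRet k σ i m) : m = j :=
  le_antisymm (hm.le hj) (hj.le hm)

theorem callerCand_of_matchRet (hc : k (σ i) = SymKind.call) (hj : MatchRet k σ i j)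
    (hip : i < p) (hpj : p < j) : CallerCand k σ p i := by
  refine ⟨hip, hc, fun m hm => ?_⟩
  rw [AbsSucc, if_pos hc] at hm
  exact hm.unique hj ▸ hpj

theorem CallerCand.exists_caller_ge (hq : CallerCand k σ p q) :
    ∃ c, Caller k σ p c ∧ q ≤ c := by
  classical
  have hqp : q ≤ p := hq.1.le
  refine ⟨Nat.findGreatest (CallerCand k σ p) p, ⟨Nat.findGreatest_spec hqp hq, fun c hc => ?_⟩,
    Nat.le_findGreatest hqp hq⟩
  exact Nat.le_findGreatest hc.1.le hc

end Callers

/-- if `i` is a call position with matching return `j`, then for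
every position `p` with `i < p < j`, position `i` occurs in the caller path of
`σ` from `p`. -/
theorem caller_path_reaches_call {A : Type*} (k : A → SymKind) (σ : ℕ → A)
    {i j p : ℕ} (hc : k (σ i) = SymKind.call) (hm : MatchRet k σ i j)
    (h1 : i < p) (h2 : p < j) :
    Relation.ReflTransGen (fun a b => Caller k σ a b) p i := by
  induction p using Nat.strong_induction_on with
  | _ p ih =>
    obtain ⟨c, hcaller, hic⟩ := (callerCand_of_matchRet hc hm h1 h2).exists_caller_ge
    obtain ⟨hcp, -⟩ := hcaller.1
    rcases hic.eq_or_lt with rfl | hic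
    · exact .single hcaller
    · exact .head hcaller (ih c hcp hic (hcp.trans h2))
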